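/- Let n ∈ ℕ and for 1 ≤ k ≤ n let X_k ⊆ 𝒜^∞ be a sofic shift presented by a strongly connected 𝒜-labeled directed multigraph G_k, where the graphs G_1, …, G_n have a common safe symbol and pairwise coprime periods. Then Y = X_1 ∩ ⋯ ∩ X_n is a nonempty transitive sofic shift. Moreover, if each X_k is topologically mixing, then Y is topologically mixing. -/

import Mathlib

open MeasureTheory Filter Topology

namespace DbarPaper

variable {A : Type} [Fintype A] [DecidableEq A] [Inhabited A]
  [TopologicalSpace A] [DiscreteTopology A]
  [MeasurableSpace A] [MeasurableSingletonClass A]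

/-- The shift map on the full shift `𝒜^∞ = ℕ → A`. -/
def shift : (ℕ → A) → (ℕ → A) := fun x n => x (n + 1)

/-- A shift space: a nonempty, closed, shift-invariant subset of the full shift. -/
def ShiftSpace (X : Set (ℕ → A)) : Prop :=
  X.Nonempty ∧ IsClosed X ∧ ∀ x ∈ X, shift x ∈ X

/-- The word `w` appears in the sequence `x`. -/
def occursIn (w : List A) (x : ℕ → A) : Prop :=
  ∃ i : ℕ, w = List.ofFn (fun k : Fin w.length => x (i + (k : ℕ)))

/-- The language of a set `X`: all finite words appearing in points of `X`. -/
def lang (X : Set (ℕ → A)) : Set (List A) := {w | ∃ x ∈ X, occursIn w x}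

/-- Words of length `n` in the language of `X`. -/
def langN (n : ℕ) (X : Set (ℕ → A)) : Set (List A) := {w | w ∈ lang X ∧ w.length = n}

/-- The pseudometric `d̄` on the full shift. -/
noncomputable def dbar (x y : ℕ → A) : ℝ :=
  Filter.limsup
    (fun n => (((Finset.range n).filter (fun j => x j ≠ y j)).card : ℝ) / (n : ℝ))
    Filter.atTop

/-- Hausdorff "distance" between two sets induced by a `ℝ`-valued distance. -/
noncomputable def hausdist {Z : Type*} (d : Z → Z → ℝ) (P Q : Set Z) : ℝ :=
  max (⨆ p : P, ⨅ q : Q, d p q) (⨆ q : Q, ⨅ p : P, d p q)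

/-- A probability measure is shift-invariant. -/
def invariantPM (μ : ProbabilityMeasure (ℕ → A)) : Prop :=
  (μ : Measure (ℕ → A)).map shift = (μ : Measure (ℕ → A))

/-- `M_σ(X)`: shift-invariant Borel probability measures giving `X` full measure. -/
def Msigma (X : Set (ℕ → A)) : Set (ProbabilityMeasure (ℕ → A)) :=
  {μ | invariantPM μ ∧ μ X = 1}

/-- `ξ` is a joining of `μ` and `ν`: a `σ×σ`-invariant measure on the product with
marginals `μ` and `ν`. -/
def IsJoining (ξ : Measure ((ℕ → A) × (ℕ → A))) (μ ν : ProbabilityMeasure (ℕ → A)) : Prop :=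
  ξ.map (Prod.map shift shift) = ξ ∧
  ξ.map Prod.fst = (μ : Measure (ℕ → A)) ∧ ξ.map Prod.snd = (ν : Measure (ℕ → A))

/-- Ornstein's metric `d̄_M` on invariant measures. -/
noncomputable def dbarM (μ ν : ProbabilityMeasure (ℕ → A)) : ℝ :=
  sInf {r : ℝ | ∃ ξ : Measure ((ℕ → A) × (ℕ → A)),
    IsJoining ξ μ ν ∧ r = (ξ {p | p.1 0 ≠ p.2 0}).toReal}

/-- `d̄_M`-stability of a shift space (Austin). -/
def DbarMStable (X : Set (ℕ → A)) : Prop :=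
  ∀ ε : ℝ, 0 < ε → ∃ U : Set (ProbabilityMeasure (ℕ → A)), IsOpen U ∧ Msigma X ⊆ U ∧
    ∀ ν ∈ U, invariantPM ν → ∃ μ ∈ Msigma X, dbarM μ ν < ε

/-- The infinite concatenation of a sequence of (nonempty) words. -/
def concatSeq (w : ℕ → List A) : ℕ → A := fun n =>
  ((List.ofFn (fun i : Fin (n + 1) => w (i : ℕ))).flatten).getD n default

/-- The `d̄`-shadowing property. -/
def DbarShadowing (X : Set (ℕ → A)) : Prop :=
  ∀ ε : ℝ, 0 < ε → ∃ N : ℕ, 0 < N ∧ ∀ w : ℕ → List A,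
    (∀ j, w j ∈ lang X) → (∀ j, N ≤ (w j).length) →
    ∃ x' ∈ X, dbar (concatSeq w) x' < ε

/-- `U_n(X)`: the union of cylinders of words of length `n` in the language of `X`. -/
def cylNbhd (X : Set (ℕ → A)) (n : ℕ) : Set (ℕ → A) :=
  {x | List.ofFn (fun k : Fin n => x (k : ℕ)) ∈ lang X}

/-- The `n`-th (topological) Markov approximation of `X`: all sequences whose subwords of
length `n+1` belong to the language of `X`. -/
def markovApprox (X : Set (ℕ → A)) (n : ℕ) : Set (ℕ → A) :=
  {x | ∀ i : ℕ, List.ofFn (fun k : Fin (n + 1) => x (i + (k : ℕ))) ∈ lang X}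

/-- Transitivity, in terms of the language. -/
def TransitiveShift (X : Set (ℕ → A)) : Prop :=
  ∀ u ∈ lang X, ∀ w ∈ lang X, ∃ v : List A, u ++ v ++ w ∈ lang X

/-- Topological mixing, in terms of the language. -/
def MixingShift (X : Set (ℕ → A)) : Prop :=
  ∀ u ∈ lang X, ∀ w ∈ lang X, ∃ N : ℕ, ∀ m : ℕ, N ≤ m →
    ∃ v : List A, v.length = m ∧ u ++ v ++ w ∈ lang X

/-- Chain mixing: all but finitely many Markov approximations are topologically mixing. -/
def ChainMixing (X : Set (ℕ → A)) : Prop :=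
  ∃ N : ℕ, ∀ n : ℕ, N ≤ n → MixingShift (markovApprox X n)

/-- `C` is the measure center of `X`: the smallest shift space contained in `X` of full
measure for every invariant measure of `X`. -/
def IsMeasureCenter (X C : Set (ℕ → A)) : Prop :=
  ShiftSpace C ∧ C ⊆ X ∧ (∀ μ ∈ Msigma X, μ C = 1) ∧
  ∀ Y : Set (ℕ → A), ShiftSpace Y → Y ⊆ X → (∀ μ ∈ Msigma X, μ Y = 1) → C ⊆ Y

/-- Measure of the cylinder determined by a word of length `n`. -/
noncomputable def cylMeasure (μ : ProbabilityMeasure (ℕ → A)) {n : ℕ} (w : Fin n → A) : ℝ :=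
  ((μ : Measure (ℕ → A)) {x | ∀ k : Fin n, x (k : ℕ) = w k}).toReal

/-- Entropy of the partition into cylinders of length `n`. -/
noncomputable def blockEntropy (μ : ProbabilityMeasure (ℕ → A)) (n : ℕ) : ℝ :=
  -∑ w : Fin n → A, cylMeasure μ w * Real.log (cylMeasure μ w)

/-- Kolmogorov–Sinai entropy of a shift-invariant measure. -/
noncomputable def ksEntropy (μ : ProbabilityMeasure (ℕ → A)) : ℝ :=
  Filter.limsup (fun n => blockEntropy μ n / (n : ℝ)) Filter.atTop

/-- `μ` is ergodic for the shift. -/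
def ErgodicPM (μ : ProbabilityMeasure (ℕ → A)) : Prop :=
  Ergodic shift (μ : Measure (ℕ → A))

/-- Ergodic measures are entropy dense in `M_σ(X)`. -/
def EntropyDense (X : Set (ℕ → A)) : Prop :=
  ∀ μ ∈ Msigma X, ∀ U : Set (ProbabilityMeasure (ℕ → A)), IsOpen U → μ ∈ U →
    ∀ ε : ℝ, 0 < ε →
      ∃ ν ∈ Msigma X, ν ∈ U ∧ ErgodicPM ν ∧ |ksEntropy ν - ksEntropy μ| < ε

/-- Topological entropy of a shift space. -/
noncomputable def topEntropy (X : Set (ℕ → A)) : ℝ :=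
  Filter.limsup (fun n => Real.log (Nat.card ↥(langN n X)) / (n : ℝ)) Filter.atTop

/-- The standard metric on the full shift. -/
noncomputable def rho (x y : ℕ → A) : ℝ :=
  open scoped Classical in
  if x = y then 0 else (2 : ℝ) ^ (-((sInf {j : ℕ | x j ≠ y j} : ℕ) : ℤ))

/-- Proximality of a shift space. -/
def ProximalShift (X : Set (ℕ → A)) : Prop :=
  ∀ x ∈ X, ∀ y ∈ X,
    Filter.liminf (fun n => rho (shift^[n] x) (shift^[n] y)) Filter.atTop = 0

/-- Minimality of a shift space. -/
def MinimalShift (X : Set (ℕ → A)) : Prop :=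
  ShiftSpace X ∧ ∀ Y : Set (ℕ → A), ShiftSpace Y → Y ⊆ X → Y = X

/-- An `A`-labeled directed multigraph on vertices `V` with edges `E`. -/
structure LabeledGraph (A V E : Type*) where
  src : E → V
  dst : E → V
  lab : E → A

namespace LabeledGraph

variable {A' V E : Type*}

/-- `es` is a path in `G` from `u` to `v`. -/
def PathFromTo (G : LabeledGraph A' V E) (es : List E) (u v : V) : Prop :=
  es.Chain' (fun e f => G.dst e = G.src f) ∧
  es.head?.map G.src = some u ∧ es.getLast?.map G.dst = some v

/-- `G` is strongly connected. -/
def StronglyConnected (G : LabeledGraph A' V E) : Prop :=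
  ∀ u v : V, ∃ es : List E, G.PathFromTo es u v

/-- `d` is the period of `G`: the gcd of lengths of closed paths. -/
def HasPeriod (G : LabeledGraph A' V E) (d : ℕ) : Prop :=
  (∀ (es : List E) (u : V), G.PathFromTo es u u → d ∣ es.length) ∧
  ∀ d' : ℕ, (∀ (es : List E) (u : V), G.PathFromTo es u u → d' ∣ es.length) → d' ∣ d

/-- `b` is a safe symbol for `G`. -/
def SafeSymbol (G : LabeledGraph A' V E) (b : A') : Prop :=
  ∀ e : E, ∃ e' : E, G.src e' = G.src e ∧ G.dst e' = G.dst e ∧ G.lab e' = b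

/-- The shift space presented by the labeled graph `G`: labels read along infinite paths. -/
def presents (G : LabeledGraph A' V E) : Set (ℕ → A') :=
  {x | ∃ e : ℕ → E, (∀ j, G.dst (e j) = G.src (e (j + 1))) ∧ ∀ j, x j = G.lab (e j)}

end LabeledGraph

/-- The coupling of a family of labeled graphs: an edge labeled `a` from `v` to `v'` exists
iff each `G k` has an edge from `v k` to `v' k` labeled `a`. -/
def coupling {A' : Type*} {n : ℕ} {V E : Fin n → Type*}
    (G : ∀ k, LabeledGraph A' (V k) (E k)) :
    LabeledGraph A' (∀ k, V k) {p : (∀ k, E k) × A' // ∀ k, (G k).lab (p.1 k) = p.2} where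
  src p := fun k => (G k).src (p.1.1 k)
  dst p := fun k => (G k).dst (p.1.1 k)
  lab p := p.1.2

/-- Sofic shift spaces: those presented by some finite labeled graph. -/
def Sofic (X : Set (ℕ → A)) : Prop :=
  ∃ (V E : Type) (_ : Fintype V) (_ : Fintype E) (G : LabeledGraph A V E),
    X = G.presents

/-- The coded shift generated by a finite set of words `B`: the closure of the set of all
shifts of infinite concatenations of words from `B`. -/
def codedShift (B : Finset (List A)) : Set (ℕ → A) :=
  closure {x | ∃ (b : ℕ → List A) (k : ℕ), (∀ i, b i ∈ B) ∧ x = shift^[k] (concatSeq b)}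

/-!
The intersection is presented by the coupling of the graphs `G k`, so it is sofic.

A safe symbol `b` can be substituted for any letter along a path, so if every `X k` contains
a point beginning `u v w` with `v` of length `m`, then `u bᵐ w b^∞` lies in every `X k`. In a
strongly connected graph of period `d` the lengths of closed paths through a vertex form an
additive semigroup of gcd `d`, which contains all large multiples of `d`; hence connecting words
`v` exist for all large `m` in a fixed residue class modulo `d`. The periods being pairwise
coprime, the Chinese remainder theorem yields one length `m` that works for every `k`
simultaneously, which gives transitivity. For mixing every large `m` works in each factor.
-/

lemma forall_rel_appendStream {α β : Type*} {R : α → β → Prop} {l : List α} {l' : List β}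
    (hl : List.Forall₂ R l l') {s : Stream' α} {s' : Stream' β}
    (hs : ∀ j, R (s.get j) (s'.get j)) : ∀ j, R ((l ++ₛ s).get j) ((l' ++ₛ s').get j) := by
  induction hl with
  | nil => exact hs
  | cons hab _ ih =>
    rintro (_ | j)
    · exact hab
    · exact ih j

section Words

variable {α : Type}

lemma lang_mono {X Y : Set (ℕ → α)} (h : X ⊆ Y) : lang X ⊆ lang Y :=
  fun _ ⟨x, hx, hocc⟩ => ⟨x, h hx, hocc⟩

lemma shift_iterate_apply (i : ℕ) (x : ℕ → α) (j : ℕ) : shift^[i] x j = x (i + j) := by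
  induction i generalizing x with
  | zero => simp
  | succ i ih => rw [Function.iterate_succ_apply, ih]; simp only [shift]; ring_nf

lemma occursIn_appendStream (w : List α) (s : Stream' α) : occursIn w (w ++ₛ s).get :=
  ⟨0, List.ext_getElem (by simp) fun j hj _ => by
    simp [← Stream'.get_append_left j w s hj]⟩

lemma mem_lang_iff_exists_appendStream {X : Set (ℕ → α)} (hX : ∀ x ∈ X, shift x ∈ X)
    {w : List α} : w ∈ lang X ↔ ∃ s : Stream' α, (w ++ₛ s).get ∈ X := by
  refine ⟨fun ⟨x, hx, i, hw⟩ => ?_, fun ⟨s, hs⟩ => ⟨_, hs, occursIn_appendStream w s⟩⟩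
  obtain ⟨s, hs⟩ : ∃ s : Stream' α, ∀ j, s.get j = x (i + w.length + j) := ⟨_, fun _ => rfl⟩
  refine ⟨s, ?_⟩
  have hshift : shift^[i] x = (w ++ₛ s).get := by
    funext j
    rw [shift_iterate_apply]
    rcases lt_or_ge j w.length with hj | hj
    · rw [Stream'.get_append_left j w _ hj, List.getElem_of_eq hw hj, List.getElem_ofFn]
    · obtain ⟨k, rfl⟩ := Nat.exists_eq_add_of_le hj
      rw [Stream'.get_append_right, hs, add_assoc]
  exact hshift ▸ Function.Iterate.rec (· ∈ X) hx hX i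

end Words

namespace LabeledGraph

section Paths

variable {α V E : Type*} {G : LabeledGraph α V E}

def IsInfPath (G : LabeledGraph α V E) (e : ℕ → E) : Prop :=
  ∀ j, G.dst (e j) = G.src (e (j + 1))

lemma PathFromTo.ne_nil {es : List E} {u v : V} (h : G.PathFromTo es u v) : es ≠ [] := by
  rintro rfl
  simp [PathFromTo] at h

lemma PathFromTo.append {es fs : List E} {u v w : V} (h₁ : G.PathFromTo es u v)
    (h₂ : G.PathFromTo fs v w) : G.PathFromTo (es ++ fs) u w := by
  obtain ⟨hc₁, hh₁, hl₁⟩ := h₁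
  obtain ⟨hc₂, hh₂, hl₂⟩ := h₂
  refine ⟨hc₁.append hc₂ fun e he f hf => ?_, ?_, ?_⟩
  · rw [he] at hl₁
    rw [hf] at hh₂
    exact (Option.some.inj hl₁).trans (Option.some.inj hh₂).symm
  · rwa [List.head?_append_of_ne_nil _ (ne_nil ⟨hc₁, hh₁, hl₁⟩)]
  · rwa [List.getLast?_append_of_ne_nil _ (ne_nil ⟨hc₂, hh₂, hl₂⟩)]

lemma isInfPath_cons {a : E} {g : Stream' E} (hg : G.IsInfPath g.get)
    (ha : G.dst a = G.src (g.get 0)) : G.IsInfPath (Stream'.cons a g).get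
  | 0 => ha
  | j + 1 => hg j

lemma isInfPath_take_appendStream {e h : Stream' E} (he : G.IsInfPath e.get)
    (hh : G.IsInfPath h.get) {n : ℕ} (hn : G.src (h.get 0) = G.src (e.get n)) :
    G.IsInfPath (e.take n ++ₛ h).get ∧ G.src ((e.take n ++ₛ h).get 0) = G.src (e.get 0) := by
  induction n generalizing e with
  | zero => exact ⟨hh, hn⟩
  | succ n ih =>
    obtain ⟨hp, hstart⟩ := ih (e := e.tail) (fun j => he (j + 1)) hn
    exact ⟨isInfPath_cons hp ((he 0).trans hstart.symm), rfl⟩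

lemma PathFromTo.isInfPath_appendStream {es : List E} {p q : V} (hes : G.PathFromTo es p q)
    {g : Stream' E} (hg : G.IsInfPath g.get) (hq : G.src (g.get 0) = q) :
    G.IsInfPath (es ++ₛ g).get ∧ G.src ((es ++ₛ g).get 0) = p := by
  induction es generalizing p with
  | nil => exact absurd rfl hes.ne_nil
  | cons a l ih =>
    obtain ⟨hc, hh, hl⟩ := hes
    simp only [List.head?_cons, Option.map_some, Option.some.injEq] at hh
    cases l with
    | nil =>
      simp only [List.getLast?_singleton, Option.map_some, Option.some.injEq] at hl
      exact ⟨isInfPath_cons hg (hl.trans hq.symm), hh⟩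
    | cons b l =>
      obtain ⟨hab, hc⟩ := List.isChain_cons_cons.mp hc
      obtain ⟨hp, hstart⟩ := ih (p := G.dst a) ⟨hc, by simp [hab], by simpa using hl⟩
      exact ⟨isInfPath_cons hp hstart.symm, hh⟩

lemma exists_isInfPath [Nonempty V] (hconn : G.StronglyConnected) : ∃ e, G.IsInfPath e := by
  have hout (v : V) : ∃ e, G.src e = v := by
    obtain ⟨es, hes⟩ := hconn v v
    obtain ⟨e, es', rfl⟩ := List.exists_cons_of_ne_nil hes.ne_nil
    exact ⟨e, by simpa using hes.2.1⟩
  choose out hout using hout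
  let v₀ : V := Classical.arbitrary V
  refine ⟨fun j => (fun e => out (G.dst e))^[j] (out v₀), fun j => ?_⟩
  dsimp only
  rw [Function.iterate_succ_apply', hout]

end Paths

section Presents

variable {α V E : Type*} {G : LabeledGraph α V E}

lemma get_mem_presents_iff {x : Stream' α} :
    x.get ∈ G.presents ↔ ∃ e : Stream' E, G.IsInfPath e.get ∧ e.map G.lab = x :=
  ⟨fun ⟨e, he, hx⟩ => ⟨e, he, Stream'.ext fun j => (hx j).symm⟩,
    fun ⟨e, he, hx⟩ => ⟨e, he, fun j => by rw [← hx]; rfl⟩⟩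

lemma mem_presents_of_forall_eq_or_eq {b : α} (hsafe : G.SafeSymbol b) {x y : ℕ → α}
    (hx : x ∈ G.presents) (hy : ∀ j, y j = x j ∨ y j = b) : y ∈ G.presents := by
  classical
  choose φ hφsrc hφdst hφlab using hsafe
  obtain ⟨e, he, hxe⟩ := hx
  let e' : ℕ → E := fun j => if y j = x j then e j else φ (e j)
  have hsrc (j : ℕ) : G.src (e' j) = G.src (e j) := by
    simp only [e']; split_ifs <;> simp [hφsrc]
  have hdst (j : ℕ) : G.dst (e' j) = G.dst (e j) := by
    simp only [e']; split_ifs <;> simp [hφdst]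
  refine ⟨e', fun j => by rw [hsrc, hdst, he], fun j => ?_⟩
  simp only [e']
  split_ifs with h
  · rw [h, hxe]
  · rw [hφlab, (hy j).resolve_left h]

lemma const_mem_presents [Nonempty V] (hconn : G.StronglyConnected) {b : α}
    (hsafe : G.SafeSymbol b) : (fun _ => b) ∈ G.presents := by
  obtain ⟨e, he⟩ := exists_isInfPath hconn
  exact mem_presents_of_forall_eq_or_eq hsafe ⟨e, he, fun _ => rfl⟩ fun _ => Or.inr rfl

lemma isClosed_presents [TopologicalSpace α] [DiscreteTopology α] [Finite E]
    (G : LabeledGraph α V E) : IsClosed G.presents := by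
  let _ : TopologicalSpace E := ⊥
  have _ : DiscreteTopology E := ⟨rfl⟩
  have hpaths : IsClosed {e : ℕ → E | G.IsInfPath e} := by
    simp only [IsInfPath, Set.ofPred_forall]
    exact isClosed_iInter fun j => IsClosed.preimage (f := fun e : ℕ → E => (e j, e (j + 1)))
      (by fun_prop) (isClosed_discrete {p : E × E | G.dst p.1 = G.src p.2})
  have hlabels : Continuous fun (e : ℕ → E) (j : ℕ) => G.lab (e j) :=
    continuous_pi fun j => continuous_of_discreteTopology.comp (continuous_apply j)
  have himage : G.presents = (fun (e : ℕ → E) (j : ℕ) => G.lab (e j)) '' {e | G.IsInfPath e} :=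
    Set.ext fun x => ⟨fun ⟨e, he, hx⟩ => ⟨e, he, funext fun j => (hx j).symm⟩,
      fun ⟨e, he, hx⟩ => ⟨e, he, fun j => congrFun hx.symm j⟩⟩
  rw [himage]
  exact (hpaths.isCompact.image hlabels).isClosed

end Presents

section Period

variable {α V E : Type*} {G : LabeledGraph α V E}

def closedPathLengths (G : LabeledGraph α V E) (q : V) : Set ℕ :=
  {L | ∃ es, G.PathFromTo es q q ∧ es.length = L}

lemma HasPeriod.ne_zero [Nonempty V] (hconn : G.StronglyConnected) {d : ℕ}
    (hper : G.HasPeriod d) : d ≠ 0 := by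
  rintro rfl
  let v : V := Classical.arbitrary V
  obtain ⟨es, hes⟩ := hconn v v
  exact hes.ne_nil (List.eq_nil_of_length_eq_zero (zero_dvd_iff.mp (hper.1 es v hes)))

lemma StronglyConnected.setGcd_closedPathLengths (hconn : G.StronglyConnected) {d : ℕ}
    (hper : G.HasPeriod d) (q : V) : Nat.setGcd (G.closedPathLengths q) = d := by
  refine Nat.dvd_antisymm (hper.2 _ fun es u hes => ?_)
    (Nat.dvd_setGcd_iff.mpr fun _ ⟨es, hes, hlen⟩ => hlen ▸ hper.1 es q hes)
  -- splicing a closed path at `u` into a detour `q → u → q` adds its length to a return time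
  obtain ⟨c₁, hc₁⟩ := hconn q u
  obtain ⟨c₂, hc₂⟩ := hconn u q
  have hdetour := Nat.setGcd_dvd_of_mem (s := G.closedPathLengths q) ⟨_, hc₁.append hc₂, rfl⟩
  have hloop := Nat.setGcd_dvd_of_mem (s := G.closedPathLengths q)
    ⟨_, hc₁.append (hes.append hc₂), rfl⟩
  simp only [List.length_append] at hdetour hloop
  rw [show c₁.length + (es.length + c₂.length) = es.length + (c₁.length + c₂.length) by ring]
    at hloop
  exact (Nat.dvd_add_left hdetour).mp hloop

lemma eq_zero_or_mem_closedPathLengths_of_mem_closure {q : V} {m : ℕ}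
    (hm : m ∈ AddSubmonoid.closure (G.closedPathLengths q)) :
    m = 0 ∨ m ∈ G.closedPathLengths q := by
  induction hm using AddSubmonoid.closure_induction with
  | mem _ h => exact Or.inr h
  | zero => exact Or.inl rfl
  | add _ _ _ _ ha hb =>
    rcases ha with rfl | ⟨es, hes, rfl⟩
    · simpa using hb
    rcases hb with rfl | ⟨fs, hfs, rfl⟩
    · exact Or.inr ⟨es, hes, rfl⟩
    · exact Or.inr ⟨es ++ fs, hes.append hfs, List.length_append⟩

lemma StronglyConnected.exists_pathFromTo_of_modEq (hconn : G.StronglyConnected) {d : ℕ}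
    (hper : G.HasPeriod d) (p q : V) :
    ∃ r N, ∀ m ≥ N, m ≡ r [MOD d] → ∃ es, G.PathFromTo es p q ∧ es.length = m := by
  obtain ⟨N, hN⟩ := Nat.exists_mem_closure_of_ge (G.closedPathLengths q)
  obtain ⟨es₀, hes₀⟩ := hconn p q
  refine ⟨es₀.length, es₀.length + N, fun m hm hmod => ?_⟩
  have hdvd : Nat.setGcd (G.closedPathLengths q) ∣ m - es₀.length := by
    rw [hconn.setGcd_closedPathLengths hper]
    exact (Nat.modEq_iff_dvd' (by omega)).mp hmod.symm
  rcases eq_zero_or_mem_closedPathLengths_of_mem_closure (hN _ (by omega) hdvd) with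
    h | ⟨es₁, hes₁, hlen⟩
  · exact ⟨es₀, hes₀, by omega⟩
  · exact ⟨es₀ ++ es₁, hes₀.append hes₁, by rw [List.length_append]; omega⟩

end Period

section Language

variable {α : Type} {V E : Type*} {G : LabeledGraph α V E}

lemma shift_mem_presents {x : ℕ → α} (hx : x ∈ G.presents) : shift x ∈ G.presents :=
  let ⟨e, he, hxe⟩ := hx
  ⟨fun j => e (j + 1), fun j => he (j + 1), fun j => hxe (j + 1)⟩

lemma mem_lang_presents_iff {w : List α} : w ∈ lang G.presents ↔
    ∃ s : Stream' α, ∃ e : Stream' E, G.IsInfPath e.get ∧ e.map G.lab = w ++ₛ s := by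
  simp only [mem_lang_iff_exists_appendStream fun _ => shift_mem_presents, get_mem_presents_iff]

lemma append_replicate_append_mem_presents {b : α} (hsafe : G.SafeSymbol b) {u v w : List α}
    (h : u ++ v ++ w ∈ lang G.presents) :
    ((u ++ List.replicate v.length b ++ w) ++ₛ Stream'.const b).get ∈ G.presents := by
  obtain ⟨s, hs⟩ := (mem_lang_iff_exists_appendStream fun _ => shift_mem_presents).mp h
  have hsame (l : List α) : List.Forall₂ (fun a c => a = c ∨ a = b) l l :=
    List.forall₂_same.mpr fun _ _ => Or.inl rfl
  have hrep : List.Forall₂ (fun a c => a = c ∨ a = b) (List.replicate v.length b) v :=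
    List.forall₂_iff_get.mpr ⟨by simp, fun _ _ _ => Or.inr (by simp)⟩
  exact mem_presents_of_forall_eq_or_eq hsafe hs
    (forall_rel_appendStream (List.rel_append (List.rel_append (hsame u) hrep) (hsame w))
      fun _ => Or.inr rfl)

lemma StronglyConnected.exists_append_mem_lang_of_modEq (hconn : G.StronglyConnected) {d : ℕ}
    (hper : G.HasPeriod d) {u w : List α} (hu : u ∈ lang G.presents)
    (hw : w ∈ lang G.presents) :
    ∃ r N, ∀ m ≥ N, m ≡ r [MOD d] → ∃ v : List α, v.length = m ∧ u ++ v ++ w ∈ lang G.presents := by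
  obtain ⟨s, e, he, hes⟩ := mem_lang_presents_iff.mp hu
  obtain ⟨t, f, hf, hft⟩ := mem_lang_presents_iff.mp hw
  obtain ⟨r, N, hN⟩ :=
    hconn.exists_pathFromTo_of_modEq hper (G.src (e.get u.length)) (G.src (f.get 0))
  refine ⟨r, N, fun m hm hmr => ?_⟩
  obtain ⟨bridge, hbridge, rfl⟩ := hN m hm hmr
  -- read `u` along `e`, cross over by `bridge`, then read `w` along `f`
  obtain ⟨hpath, hstart⟩ := hbridge.isInfPath_appendStream hf rfl
  refine ⟨bridge.map G.lab, List.length_map _, mem_lang_presents_iff.mpr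
    ⟨t, e.take u.length ++ₛ (bridge ++ₛ f), (isInfPath_take_appendStream he hpath hstart).1, ?_⟩⟩
  rw [Stream'.map_append_stream, Stream'.map_append_stream, Stream'.map_take, hes, hft,
    Stream'.take_append_of_le_length _ u _ le_rfl, List.take_length, Stream'.append_append_stream,
    Stream'.append_append_stream]

end Language

end LabeledGraph

section Intersection

variable {α : Type} {ι : Type*} {V E : ι → Type*} {G : ∀ k, LabeledGraph α (V k) (E k)}

lemma append_replicate_append_mem_lang_iInter {b : α} (hsafe : ∀ k, (G k).SafeSymbol b)
    {u w : List α} {m : ℕ}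
    (h : ∀ k, ∃ v : List α, v.length = m ∧ u ++ v ++ w ∈ lang (G k).presents) :
    u ++ List.replicate m b ++ w ∈ lang (⋂ k, (G k).presents) := by
  refine ⟨_, Set.mem_iInter.mpr fun k => ?_, occursIn_appendStream _ (Stream'.const b)⟩
  obtain ⟨v, rfl, hv⟩ := h k
  exact LabeledGraph.append_replicate_append_mem_presents (hsafe k) hv

lemma exists_ge_forall_modEq [Fintype ι] {d : ι → ℕ} (hd : ∀ k, d k ≠ 0)
    (hcop : Pairwise fun k j => Nat.Coprime (d k) (d j)) (r : ι → ℕ) (N : ℕ) :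
    ∃ m ≥ N, ∀ k, m ≡ r k [MOD d k] := by
  classical
  obtain ⟨m₀, hm₀⟩ := Nat.chineseRemainderOfFinset r d Finset.univ (fun k _ => hd k)
    fun k _ j _ hkj => hcop hkj
  have hprod : 1 ≤ ∏ k, d k :=
    Nat.one_le_iff_ne_zero.mpr (Finset.prod_ne_zero_iff.mpr fun k _ => hd k)
  refine ⟨m₀ + N * ∏ k, d k, by nlinarith, fun k => ?_⟩
  have hdvd : d k ∣ N * ∏ k, d k :=
    Dvd.dvd.mul_left (Finset.dvd_prod_of_mem d (Finset.mem_univ k)) N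
  have hshift : m₀ + N * ∏ k, d k ≡ m₀ [MOD d k] := by
    simpa using (Nat.modEq_zero_iff_dvd.mpr hdvd).add_left m₀
  exact hshift.trans (hm₀ k (Finset.mem_univ k))

lemma mem_lang_of_mem_lang_iInter {w : List α} (hw : w ∈ lang (⋂ k, (G k).presents)) (k : ι) :
    w ∈ lang (G k).presents :=
  lang_mono (Set.iInter_subset _ k) hw

theorem shiftSpace_iInter_presents [TopologicalSpace α] [DiscreteTopology α]
    [∀ k, Nonempty (V k)] [∀ k, Finite (E k)] (hconn : ∀ k, (G k).StronglyConnected) {b : α}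
    (hsafe : ∀ k, (G k).SafeSymbol b) : ShiftSpace (⋂ k, (G k).presents) :=
  ⟨⟨fun _ => b, Set.mem_iInter.mpr fun k => LabeledGraph.const_mem_presents (hconn k) (hsafe k)⟩,
    isClosed_iInter fun k => (G k).isClosed_presents,
    fun _ hx => Set.mem_iInter.mpr fun k =>
      LabeledGraph.shift_mem_presents (Set.mem_iInter.mp hx k)⟩

theorem transitiveShift_iInter_presents [Finite ι] [∀ k, Nonempty (V k)]
    (hconn : ∀ k, (G k).StronglyConnected) {b : α} (hsafe : ∀ k, (G k).SafeSymbol b)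
    {d : ι → ℕ} (hper : ∀ k, (G k).HasPeriod (d k))
    (hcop : Pairwise fun k j => Nat.Coprime (d k) (d j)) :
    TransitiveShift (⋂ k, (G k).presents) := by
  have := Fintype.ofFinite ι
  intro u hu w hw
  choose r N hN using fun k => (hconn k).exists_append_mem_lang_of_modEq (hper k)
    (mem_lang_of_mem_lang_iInter hu k) (mem_lang_of_mem_lang_iInter hw k)
  obtain ⟨m, hm, hmr⟩ := exists_ge_forall_modEq (fun k => (hper k).ne_zero (hconn k)) hcop r
    (Finset.univ.sup N)
  exact ⟨_, append_replicate_append_mem_lang_iInter hsafe fun k =>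
    hN k m ((Finset.le_sup (Finset.mem_univ k)).trans hm) (hmr k)⟩

theorem mixingShift_iInter_presents [Finite ι] {b : α} (hsafe : ∀ k, (G k).SafeSymbol b)
    (hmix : ∀ k, MixingShift (G k).presents) : MixingShift (⋂ k, (G k).presents) := by
  have := Fintype.ofFinite ι
  intro u hu w hw
  choose N hN using fun k =>
    hmix k u (mem_lang_of_mem_lang_iInter hu k) w (mem_lang_of_mem_lang_iInter hw k)
  exact ⟨Finset.univ.sup N, fun m hm => ⟨_, List.length_replicate,
    append_replicate_append_mem_lang_iInter hsafe fun k =>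
      hN k m ((Finset.le_sup (Finset.mem_univ k)).trans hm)⟩⟩

end Intersection

lemma presents_coupling {α : Type*} {n : ℕ} {V E : Fin n → Type*}
    (G : ∀ k, LabeledGraph α (V k) (E k)) : (coupling G).presents = ⋂ k, (G k).presents := by
  ext x
  simp only [Set.mem_iInter]
  constructor
  · rintro ⟨e, he, hx⟩ k
    exact ⟨fun j => (e j).1.1 k, fun j => congrFun (he j) k,
      fun j => (hx j).trans ((e j).2 k).symm⟩
  · intro hx
    choose e he hxe using hx
    exact ⟨fun j => ⟨(fun k => e k j, x j), fun k => (hxe k j).symm⟩,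
      fun j => funext fun k => he k j, fun j => rfl⟩

theorem sofic_iInter_presents {α : Type} [Finite α] {n : ℕ} {V E : Fin n → Type}
    [∀ k, Finite (V k)] [∀ k, Finite (E k)] (G : ∀ k, LabeledGraph α (V k) (E k)) :
    Sofic (⋂ k, (G k).presents) :=
  ⟨_, _, Fintype.ofFinite _, Fintype.ofFinite _, coupling G, (presents_coupling G).symm⟩

theorem statement14_general (n : ℕ)
    (V E : Fin n → Type)
    [∀ k, Fintype (V k)] [∀ k, Fintype (E k)] (hV : ∀ k, Nonempty (V k))
    (G : ∀ k, LabeledGraph A (V k) (E k))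
    (hconn : ∀ k, (G k).StronglyConnected)
    (b : A) (hsafe : ∀ k, (G k).SafeSymbol b)
    (d : Fin n → ℕ) (hper : ∀ k, (G k).HasPeriod (d k))
    (hcop : ∀ k j, k ≠ j → Nat.Coprime (d k) (d j)) :
    ShiftSpace (⋂ k, (G k).presents) ∧ TransitiveShift (⋂ k, (G k).presents) ∧
    Sofic (⋂ k, (G k).presents) ∧
    ((∀ k, MixingShift ((G k).presents)) → MixingShift (⋂ k, (G k).presents)) :=
  ⟨shiftSpace_iInter_presents hconn hsafe, transitiveShift_iInter_presents hconn hsafe hper hcop,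
    sofic_iInter_presents G, mixingShift_iInter_presents hsafe⟩

/-- an intersection of transitive sofic shifts presented by strongly
connected graphs with a common safe symbol and pairwise coprime periods is a nonempty
transitive sofic shift; it is topologically mixing whenever all the factors are. -/
theorem statement14 (hA : 2 ≤ Fintype.card A) (n : ℕ) (hn : 0 < n)
    (V E : Fin n → Type)
    [∀ k, Fintype (V k)] [∀ k, Fintype (E k)] (hV : ∀ k, Nonempty (V k))
    (G : ∀ k, LabeledGraph A (V k) (E k))
    (hconn : ∀ k, (G k).StronglyConnected)
    (b : A) (hsafe : ∀ k, (G k).SafeSymbol b)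
    (d : Fin n → ℕ) (hper : ∀ k, (G k).HasPeriod (d k))
    (hcop : ∀ k j, k ≠ j → Nat.Coprime (d k) (d j)) :
    ShiftSpace (⋂ k, (G k).presents) ∧ TransitiveShift (⋂ k, (G k).presents) ∧
    Sofic (⋂ k, (G k).presents) ∧
    ((∀ k, MixingShift ((G k).presents)) → MixingShift (⋂ k, (G k).presents)) :=
  statement14_general n V E hV G hconn b hsafe d hper hcop

end DbarPaper
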